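/- For every h ∈ C↑_sur(b^ω), the filterings refining the filtering of h are exactly the filterings of compositions with h: F_b((U^h_s)) = {(U^{f∘h}_s)_{s ∈ b^{<ω}} : f ∈ C↑_sur(b^ω)}, where a filtering (V_s) refines (U_s) if each V_s lies in the Boolean algebra generated by the U_s. -/

import Mathlib

noncomputable section
open Classical

/-- Lexicographic strict order on `ℕ → Fin b`. -/
def lexLT (b : ℕ) (x y : ℕ → Fin b) : Prop :=
  ∃ n, (∀ m, m < n → x m = y m) ∧ x n < y n

/-- Lexicographic order `≤_lex` on `ℕ → Fin b`. -/
def lexLE (b : ℕ) (x y : ℕ → Fin b) : Prop := x = y ∨ lexLT b x y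

def IsGreatestLex (b : ℕ) (S : Set (ℕ → Fin b)) (x : ℕ → Fin b) : Prop :=
  x ∈ S ∧ ∀ y ∈ S, lexLE b y x

def IsLeastLex (b : ℕ) (S : Set (ℕ → Fin b)) (x : ℕ → Fin b) : Prop :=
  x ∈ S ∧ ∀ y ∈ S, lexLE b x y

/-- `S` is an interval for the lexicographic order. -/
def LexInterval (b : ℕ) (S : Set (ℕ → Fin b)) : Prop :=
  ∀ x ∈ S, ∀ y ∈ S, ∀ z, lexLE b x z → lexLE b z y → z ∈ S

/-- The basic clopen set of sequences extending the finite sequence `s`. -/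
def W (b : ℕ) (s : List (Fin b)) : Set (ℕ → Fin b) :=
  {x | ∀ i, (hi : i < s.length) → x i = s.get ⟨i, hi⟩}

/-- Continuous nondecreasing surjections of `b^ω`, i.e. members of `C↑_sur(b^ω)`. -/
def CSur (b : ℕ) (f : (ℕ → Fin b) → (ℕ → Fin b)) : Prop :=
  Continuous f ∧ Function.Surjective f ∧ ∀ x y, lexLE b x y → lexLE b (f x) (f y)

/-- A filtering on `b^ω`. -/
def Filtering (b : ℕ) (U : List (Fin b) → Set (ℕ → Fin b)) : Prop :=
  (∀ s, (U s).Nonempty ∧ IsClopen (U s) ∧ LexInterval b (U s)) ∧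
  U [] = Set.univ ∧
  (∀ s, U s = ⋃ i : Fin b, U (s ++ [i])) ∧
  (∀ s, ∀ i j : Fin b, i ≠ j → Disjoint (U (s ++ [i])) (U (s ++ [j]))) ∧
  (∀ s, ∀ i j : Fin b, i < j → ∀ x y,
    IsGreatestLex b (U (s ++ [i])) x → IsGreatestLex b (U (s ++ [j])) y → lexLT b x y)

/-- `A_b`: sequences eventually equal to `b-1` (the top of `Fin b`), except the constant
top sequence (the lexicographic maximum of `b^ω`). -/
def AbSet (b : ℕ) : Set (ℕ → Fin b) :=
  {x | (∃ N, ∀ n, N ≤ n → ∀ j : Fin b, j ≤ x n) ∧ ¬ ∀ n, ∀ j : Fin b, j ≤ x n}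

/-- `Y` is order isomorphic to `ℚ` with respect to the lexicographic order. -/
def OrderIsoQ (b : ℕ) (Y : Set (ℕ → Fin b)) : Prop :=
  ∃ e : ℚ ≃ Y, ∀ p q : ℚ, p ≤ q ↔ lexLE b (e p).1 (e q).1

/-- `Y_f = {max f⁻¹(W_s) : s ∈ b^{<ω}} \ {max b^ω}`. -/
def Yset (b : ℕ) (f : (ℕ → Fin b) → (ℕ → Fin b)) : Set (ℕ → Fin b) :=
  {x | (∃ s : List (Fin b), IsGreatestLex b (f ⁻¹' W b s) x) ∧ ¬ ∀ n, ∀ j : Fin b, j ≤ x n}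

/-- The metric `ρ_b` on `b^ω`. -/
def rhoB (b : ℕ) (x y : ℕ → Fin b) : ℝ :=
  if h : x = y then 0 else (2 : ℝ) ^ (-(Nat.find (Function.ne_iff.mp h) : ℤ))

/-- The sup-metric `ρ_∞` on `C↑_sur(b^ω)`. -/
def rhoInf (b : ℕ) (f g : (ℕ → Fin b) → (ℕ → Fin b)) : ℝ :=
  ⨆ x, rhoB b (f x) (g x)

/-- `⌊log₂(1/ε)⌋ + 1`. -/
def kOf (ε : ℝ) : ℕ := ⌊Real.logb 2 (1 / ε)⌋₊ + 1

/-- The `l`-th odd tangent number `t_l = tan^{(2l-1)}(0)`. -/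
def oddTangent (l : ℕ) : ℝ := iteratedDeriv (2 * l - 1) Real.tan 0

/-- The lexicographically increasing enumeration of `b^k`: `sEnum b k hb i` is the
`i`-th element of `b^k` in lexicographic order (base-`b` digits, most significant first). -/
def sEnum (b k : ℕ) (hb : 0 < b) (i : ℕ) : List (Fin b) :=
  List.ofFn fun j : Fin k => (⟨i / b ^ (k - 1 - (j : ℕ)) % b, Nat.mod_lt _ hb⟩ : Fin b)

end

/-- Membership in the Boolean algebra of sets generated by a family `A`. -/
inductive InAlgebra {α : Type*} (A : Set (Set α)) : Set α → Prop
  | base : ∀ S ∈ A, InAlgebra A S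
  | empty : InAlgebra A ∅
  | compl : ∀ S, InAlgebra A S → InAlgebra A Sᶜ
  | union : ∀ S T, InAlgebra A S → InAlgebra A T → InAlgebra A (S ∪ T)

open Set Topology TopologicalSpace

/-!
A filtering `C` is always the filtering of a map in `C↑_sur(b^ω)`: the map `addressMap C` reading
off the branch `s₀ ⊑ s₁ ⊑ …` with `x ∈ C sₙ` for all `n`. It is monotone because the pieces
`C (s ++ [i])` are lexicographically ordered in `i`, and surjective by compactness.
If `V` refines the filtering of `h`, then each `V s` is a preimage `h⁻¹(C s)`; since `h` is a quotient
map (a continuous surjection from a compact space onto a Hausdorff one), `C` is again a filtering,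
and `V` is the filtering of `addressMap C ∘ h`. Conversely, `(f ∘ h)⁻¹(W s) = h⁻¹(f⁻¹(W s))`, and the
clopen set `f⁻¹(W s)` is a finite union of cylinders `W t`.
-/

namespace InAlgebra

variable {α β ι : Type*}

theorem sUnion {A 𝒮 : Set (Set α)} (h𝒮 : 𝒮.Finite) (hA : ∀ S ∈ 𝒮, InAlgebra A S) :
    InAlgebra A (⋃₀ 𝒮) := by
  induction 𝒮, h𝒮 using Set.Finite.induction_on with
  | empty => simpa using InAlgebra.empty
  | insert _ _ ih =>
    rw [sUnion_insert]
    exact .union _ _ (hA _ (mem_insert _ _)) (ih fun S hS => hA S (mem_insert_of_mem _ hS))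

theorem of_isClopen [TopologicalSpace α] [CompactSpace α] {A : Set (Set α)}
    (hA : IsTopologicalBasis A) {C : Set α} (hC : IsClopen C) : InAlgebra A C := by
  obtain ⟨t, rfl⟩ := eq_sUnion_finset_of_isTopologicalBasis_of_isCompact_open A hA C
    hC.isClosed.isCompact hC.isOpen
  refine sUnion (t.finite_toSet.image _) ?_
  rintro _ ⟨S, -, rfl⟩
  exact .base _ S.2

theorem preimage_iff (g : α → β) (F : ι → Set β) {V : Set α} :
    InAlgebra {S | ∃ t, S = g ⁻¹' F t} V ↔
      ∃ C, InAlgebra {S | ∃ t, S = F t} C ∧ V = g ⁻¹' C := by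
  constructor
  · intro h
    induction h with
    | base S hS => obtain ⟨t, rfl⟩ := hS; exact ⟨F t, .base _ ⟨t, rfl⟩, rfl⟩
    | empty => exact ⟨∅, .empty, rfl⟩
    | compl S _ ih =>
      obtain ⟨C, hC, rfl⟩ := ih
      exact ⟨Cᶜ, .compl _ hC, rfl⟩
    | union S T _ _ ih₁ ih₂ =>
      obtain ⟨C₁, h₁, rfl⟩ := ih₁
      obtain ⟨C₂, h₂, rfl⟩ := ih₂
      exact ⟨C₁ ∪ C₂, .union _ _ h₁ h₂, rfl⟩
  · rintro ⟨C, hC, rfl⟩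
    induction hC with
    | base S hS => obtain ⟨t, rfl⟩ := hS; exact .base _ ⟨t, rfl⟩
    | empty => exact .empty
    | compl S _ ih => exact .compl _ ih
    | union S T _ _ ih₁ ih₂ => exact .union _ _ ih₁ ih₂

end InAlgebra

section

variable {b : ℕ}

theorem lexLT_iff_toLex_lt {x y : ℕ → Fin b} : lexLT b x y ↔ toLex x < toLex y := Iff.rfl

theorem lexLE_iff_toLex_le {x y : ℕ → Fin b} : lexLE b x y ↔ toLex x ≤ toLex y := by
  rw [lexLE, lexLT_iff_toLex_lt, le_iff_eq_or_lt, toLex_inj]; rfl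

theorem not_lexLE_iff {x y : ℕ → Fin b} : ¬ lexLE b x y ↔ lexLT b y x := by
  rw [lexLE_iff_toLex_le, lexLT_iff_toLex_lt, not_le]; rfl

theorem not_lexLT_iff {x y : ℕ → Fin b} : ¬ lexLT b x y ↔ lexLE b y x := by
  rw [lexLE_iff_toLex_le, lexLT_iff_toLex_lt]; exact not_lt

theorem lexLE_trans {x y z : ℕ → Fin b} (hxy : lexLE b x y) (hyz : lexLE b y z) :
    lexLE b x z := by
  rw [lexLE_iff_toLex_le] at *; exact hxy.trans hyz

theorem lexLE_antisymm {x y : ℕ → Fin b} (hxy : lexLE b x y) (hyx : lexLE b y x) : x = y := by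
  rw [lexLE_iff_toLex_le] at *; exact toLex_inj.1 (hxy.antisymm hyx)

theorem lexLE_total (x y : ℕ → Fin b) : lexLE b x y ∨ lexLE b y x := by
  simp only [lexLE_iff_toLex_le]; exact le_total _ _

theorem isClosed_setOf_lexLE (y : ℕ → Fin b) : IsClosed {x | lexLE b y x} := by
  have : {x | lexLE b y x}ᶜ = ⋃ n, PiNat.cylinder y n ∩ {x | x n < y n} := by
    ext x
    simp only [mem_compl_iff, mem_ofPred_eq, not_lexLE_iff, lexLT, mem_iUnion, mem_inter_iff,
      PiNat.mem_cylinder_iff]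
  rw [← isOpen_compl_iff, this]
  exact isOpen_iUnion fun n =>
    (PiNat.isOpen_cylinder _ y n).inter ((isOpen_discrete {a | a < y n}).preimage
      (continuous_apply n : Continuous fun x : ℕ → Fin b => x n))

theorem exists_isGreatestLex {S : Set (ℕ → Fin b)} (hS : IsClosed S) (hne : S.Nonempty) :
    ∃ m, IsGreatestLex b S m := by
  have : Nonempty S := hne.to_subtype
  set T : S → Set (ℕ → Fin b) := fun y => S ∩ {x | lexLE b y.1 x}
  have hT : ∀ y, IsClosed (T y) := fun y => hS.inter (isClosed_setOf_lexLE y.1)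
  have hdir : Directed (· ⊇ ·) T := by
    intro y z
    rcases lexLE_total y.1 z.1 with h | h
    · exact ⟨z, fun x hx => ⟨hx.1, lexLE_trans h hx.2⟩, subset_rfl⟩
    · exact ⟨y, subset_rfl, fun x hx => ⟨hx.1, lexLE_trans h hx.2⟩⟩
  obtain ⟨m, hm⟩ := IsCompact.nonempty_iInter_of_directed_nonempty_isCompact_isClosed T hdir
    (fun y => ⟨y, y.2, Or.inl rfl⟩) (fun y => (hT y).isCompact) hT
  rw [mem_iInter] at hm
  exact ⟨m, (hm ⟨_, hne.some_mem⟩).1, fun y hy => (hm ⟨y, hy⟩).2⟩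

theorem mem_W_iff_ofFn {s : List (Fin b)} {x : ℕ → Fin b} :
    x ∈ W b s ↔ List.ofFn (fun k : Fin s.length => x k) = s := by
  rw [List.ext_get_iff]
  simp [W]

theorem mem_W_append_singleton {s : List (Fin b)} {i : Fin b} {x : ℕ → Fin b} :
    x ∈ W b (s ++ [i]) ↔ x ∈ W b s ∧ x s.length = i := by
  simp only [W, mem_ofPred_eq, List.length_append, List.length_singleton, List.get_eq_getElem]
  constructor
  · intro hx
    refine ⟨fun k hk => by simpa [List.getElem_append_left hk] using hx k (by omega), ?_⟩
    simpa using hx s.length (by omega)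
  · rintro ⟨hx, hi⟩ k hk
    rcases Nat.lt_or_ge k s.length with hk' | hk'
    · simpa [List.getElem_append_left hk'] using hx k hk'
    · obtain rfl : k = s.length := by omega
      simpa using hi

theorem W_nil : W b [] = univ := by
  ext x; simp [W]

theorem W_eq_iUnion (s : List (Fin b)) : W b s = ⋃ i : Fin b, W b (s ++ [i]) := by
  ext x
  simp only [mem_iUnion, mem_W_append_singleton]
  exact ⟨fun hx => ⟨x s.length, hx, rfl⟩, fun ⟨_, hx, _⟩ => hx⟩

theorem disjoint_W_append {s : List (Fin b)} {i j : Fin b} (hij : i ≠ j) :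
    Disjoint (W b (s ++ [i])) (W b (s ++ [j])) := by
  rw [disjoint_left]
  intro x hi hj
  exact hij ((mem_W_append_singleton.1 hi).2.symm.trans (mem_W_append_singleton.1 hj).2)

theorem W_eq_cylinder {s : List (Fin b)} {x : ℕ → Fin b} (hx : x ∈ W b s) :
    W b s = PiNat.cylinder x s.length := by
  ext y
  simp only [PiNat.mem_cylinder_iff]
  exact ⟨fun hy i hi => (hy i hi).trans (hx i hi).symm, fun hy i hi => (hy i hi).trans (hx i hi)⟩

theorem isClopen_W (s : List (Fin b)) : IsClopen (W b s) := by
  have : W b s = ⋂ k : Fin s.length, (fun x : ℕ → Fin b => x k) ⁻¹' {s.get k} := by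
    ext x
    simp only [mem_iInter, mem_preimage, mem_singleton_iff]
    exact ⟨fun hx k => hx k k.2, fun hx k hk => hx ⟨k, hk⟩⟩
  rw [this]
  exact isClopen_iInter_of_finite fun k =>
    (isClopen_discrete {s.get k}).preimage (continuous_apply (k : ℕ))

theorem W_nonempty [NeZero b] (s : List (Fin b)) : (W b s).Nonempty :=
  ⟨fun n => if hn : n < s.length then s.get ⟨n, hn⟩ else 0, fun i hi => by simp [hi]⟩

theorem isTopologicalBasis_W [NeZero b] :
    IsTopologicalBasis {S : Set (ℕ → Fin b) | ∃ s, S = W b s} := by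
  convert PiNat.isTopologicalBasis_cylinders (fun _ : ℕ => Fin b) using 1
  ext S
  constructor
  · rintro ⟨s, rfl⟩
    obtain ⟨x, hx⟩ := W_nonempty s
    exact ⟨x, s.length, W_eq_cylinder hx⟩
  · rintro ⟨x, n, rfl⟩
    have hx : x ∈ W b (List.ofFn fun k : Fin n => x k) := by
      rw [mem_W_iff_ofFn]; simp
    exact ⟨_, by simpa using (W_eq_cylinder hx).symm⟩

theorem lexInterval_W (s : List (Fin b)) : LexInterval b (W b s) := by
  intro x hx y hy z hxz hzy
  by_contra hz
  classical
  have hex : ∃ n, ∃ hn : n < s.length, z n ≠ s.get ⟨n, hn⟩ := by simpa [W] using hz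
  obtain ⟨hn, hne⟩ := Nat.find_spec hex
  have hagree : ∀ m < Nat.find hex, ∀ v ∈ W b s, z m = v m := fun m hm v hv => by
    have hms : m < s.length := hm.trans hn
    rw [hv m hms]
    by_contra h
    exact Nat.find_min hex hm ⟨hms, h⟩
  rcases lt_or_gt_of_ne hne with hlt | hgt
  · refine not_lexLE_iff.2 ⟨_, fun m hm => hagree m hm x hx, ?_⟩ hxz
    rwa [hx _ hn]
  · refine not_lexLE_iff.2 ⟨_, fun m hm => (hagree m hm y hy).symm, ?_⟩ hzy
    rwa [hy _ hn]

theorem lexLT_of_mem_W_append {s : List (Fin b)} {i j : Fin b} (hij : i < j) {x y : ℕ → Fin b}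
    (hx : x ∈ W b (s ++ [i])) (hy : y ∈ W b (s ++ [j])) : lexLT b x y := by
  rw [mem_W_append_singleton] at hx hy
  refine ⟨s.length, fun m hm => (hx.1 m hm).trans (hy.1 m hm).symm, ?_⟩
  rwa [hx.2, hy.2]

theorem CSur.comp {f g : (ℕ → Fin b) → (ℕ → Fin b)} (hf : CSur b f) (hg : CSur b g) :
    CSur b (f ∘ g) :=
  ⟨hf.1.comp hg.1, hf.2.1.comp hg.2.1, fun x y hxy => hf.2.2 _ _ (hg.2.2 x y hxy)⟩

theorem LexInterval.preimage {g : (ℕ → Fin b) → (ℕ → Fin b)}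
    (hg : ∀ x y, lexLE b x y → lexLE b (g x) (g y)) {S : Set (ℕ → Fin b)}
    (hS : LexInterval b S) : LexInterval b (g ⁻¹' S) :=
  fun x hx y hy z hxz hzy => hS _ hx _ hy _ (hg x z hxz) (hg z y hzy)

theorem LexInterval.of_preimage {g : (ℕ → Fin b) → (ℕ → Fin b)}
    (hg : ∀ x y, lexLE b x y → lexLE b (g x) (g y)) (hgs : Function.Surjective g)
    {S : Set (ℕ → Fin b)} (hS : LexInterval b (g ⁻¹' S)) : LexInterval b S := by
  intro u hu v hv z huz hzv
  obtain ⟨x, rfl⟩ := hgs u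
  obtain ⟨y, rfl⟩ := hgs v
  obtain ⟨w, rfl⟩ := hgs z
  rcases lexLE_total x w with hxw | hwx
  · rcases lexLE_total w y with hwy | hyw
    · exact hS x hu y hv w hxw hwy
    · rwa [lexLE_antisymm hzv (hg _ _ hyw)]
  · rwa [lexLE_antisymm (hg _ _ hwx) huz]

namespace Filtering

variable {C : List (Fin b) → Set (ℕ → Fin b)}

theorem lexLT_of_mem (hC : Filtering b C) {s : List (Fin b)} {i j : Fin b} (hij : i < j)
    {x y : ℕ → Fin b} (hx : x ∈ C (s ++ [i])) (hy : y ∈ C (s ++ [j])) : lexLT b x y := by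
  obtain ⟨mi, hmi⟩ := exists_isGreatestLex (hC.1 _).2.1.isClosed ⟨x, hx⟩
  obtain ⟨mj, hmj⟩ := exists_isGreatestLex (hC.1 _).2.1.isClosed ⟨y, hy⟩
  by_contra hxy
  -- `y ≤ x ≤ mi < mj` puts `mi` into the interval `C (s ++ [j])`
  have hmi_mem : mi ∈ C (s ++ [j]) :=
    (hC.1 _).2.2 y hy mj hmj.1 mi (lexLE_trans (not_lexLT_iff.1 hxy) (hmi.2 x hx))
      (Or.inr (hC.2.2.2.2 s i j hij mi mj hmi hmj))
  exact disjoint_left.1 (hC.2.2.2.1 s i j hij.ne) hmi.1 hmi_mem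

theorem preimage (hC : Filtering b C) {g : (ℕ → Fin b) → (ℕ → Fin b)} (hg : CSur b g) :
    Filtering b (fun s => g ⁻¹' C s) := by
  obtain ⟨hgc, hgs, hgm⟩ := hg
  refine ⟨fun s => ⟨(hC.1 s).1.preimage hgs, (hC.1 s).2.1.preimage hgc,
    (hC.1 s).2.2.preimage hgm⟩, by simp [hC.2.1], fun s => ?_,
    fun s i j hij => (hC.2.2.2.1 s i j hij).preimage g, fun s i j hij x y hx hy => ?_⟩
  · simp only [hC.2.2.1 s, preimage_iUnion]
  · have hlt := hC.lexLT_of_mem hij hx.1 hy.1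
    by_contra hxy
    exact not_lexLE_iff.2 hlt (hgm _ _ (not_lexLT_iff.1 hxy))

theorem of_preimage {h : (ℕ → Fin b) → (ℕ → Fin b)} (hV : Filtering b (fun s => h ⁻¹' C s))
    (hh : CSur b h) : Filtering b C := by
  obtain ⟨hhc, hhs, hhm⟩ := hh
  have hq : IsQuotientMap h := hhc.isClosedMap.isQuotientMap hhc hhs
  have hinj : Function.Injective (Set.preimage h) := preimage_injective.2 hhs
  have hdisj : ∀ s (i j : Fin b), i ≠ j → Disjoint (C (s ++ [i])) (C (s ++ [j])) :=
    fun s i j hij => (hV.2.2.2.1 s i j hij).of_preimage hhs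
  refine ⟨fun s => ⟨?_, hq.isClopen_preimage.1 (hV.1 s).2.1, (hV.1 s).2.2.of_preimage hhm hhs⟩,
    hinj (by simpa using hV.2.1), fun s => hinj (by simpa using hV.2.2.1 s), hdisj,
    fun s i j hij x y hx hy => ?_⟩
  · obtain ⟨x, hx⟩ := (hV.1 s).1
    exact ⟨h x, hx⟩
  · obtain ⟨x, rfl⟩ := hhs x
    obtain ⟨y, rfl⟩ := hhs y
    refine (hhm x y (Or.inr (hV.lexLT_of_mem hij hx.1 hy.1))).resolve_left fun hxy => ?_
    exact disjoint_left.1 (hdisj s i j hij.ne) hx.1 (hxy ▸ hy.1)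

end Filtering

theorem filtering_W [NeZero b] : Filtering b (W b) :=
  ⟨fun s => ⟨W_nonempty s, isClopen_W s, lexInterval_W s⟩, W_nil, W_eq_iUnion,
    fun _ _ _ hij => disjoint_W_append hij,
    fun _ _ _ hij _ _ hx hy => lexLT_of_mem_W_append hij hx.1 hy.1⟩

namespace Filtering

variable [NeZero b] (C : List (Fin b) → Set (ℕ → Fin b)) (x : ℕ → Fin b)

/-- For a filtering `C`, `address C x n` is the unique `s` of length `n` with `x ∈ C s`. -/
noncomputable def address : ℕ → List (Fin b)
  | 0 => []
  | n + 1 => address n ++ [Classical.epsilon fun i => x ∈ C (address n ++ [i])]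

noncomputable def addressMap (n : ℕ) : Fin b :=
  Classical.epsilon fun i => x ∈ C (address C x n ++ [i])

theorem address_succ (n : ℕ) : address C x (n + 1) = address C x n ++ [addressMap C x n] := rfl

theorem address_eq_ofFn (n : ℕ) :
    address C x n = List.ofFn fun k : Fin n => addressMap C x k := by
  induction n with
  | zero => rfl
  | succ n ih => rw [address_succ, ih, List.ofFn_succ', List.concat_eq_append]; rfl

variable {C}

theorem mem_address (hC : Filtering b C) (n : ℕ) : x ∈ C (address C x n) := by
  induction n with
  | zero => simp [address, hC.2.1]
  | succ n ih =>
    rw [hC.2.2.1] at ih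
    exact Classical.epsilon_spec (mem_iUnion.1 ih)

theorem mem_iff_address_eq (hC : Filtering b C) (s : List (Fin b)) :
    x ∈ C s ↔ address C x s.length = s := by
  refine ⟨fun hx => ?_, fun hs => hs ▸ mem_address x hC _⟩
  induction s using List.reverseRecOn with
  | nil => rfl
  | append_singleton t i ih =>
    have ht : address C x t.length = t := ih (by rw [hC.2.2.1 t]; exact mem_iUnion.2 ⟨i, hx⟩)
    have hxt := mem_address x hC (t.length + 1)
    rw [address_succ, ht] at hxt
    have hi : addressMap C x t.length = i := by
      by_contra hne
      exact disjoint_left.1 (hC.2.2.2.1 t _ i hne) hxt hx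
    rw [List.length_append, List.length_singleton, address_succ, ht, hi]

theorem preimage_addressMap_W (hC : Filtering b C) (s : List (Fin b)) :
    addressMap C ⁻¹' W b s = C s := by
  ext x
  rw [mem_preimage, mem_W_iff_ofFn, mem_iff_address_eq x hC, address_eq_ofFn]

theorem continuous_addressMap (hC : Filtering b C) : Continuous (addressMap C) := by
  rw [isTopologicalBasis_W.continuous_iff]
  rintro _ ⟨s, rfl⟩
  rw [preimage_addressMap_W hC]
  exact (hC.1 s).2.1.isOpen

theorem surjective_addressMap (hC : Filtering b C) : Function.Surjective (addressMap C) := by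
  -- the range is compact, hence closed, and meets every cylinder `W b s`
  have hdense : Dense (range (addressMap C)) := by
    rw [isTopologicalBasis_W.dense_iff]
    rintro _ ⟨s, rfl⟩ -
    obtain ⟨x, hx⟩ := (hC.1 s).1
    exact ⟨addressMap C x, by rwa [← preimage_addressMap_W hC] at hx, mem_range_self x⟩
  rw [← range_eq_univ, ← hdense.closure_eq,
    (isCompact_range (continuous_addressMap hC)).isClosed.closure_eq]

theorem addressMap_mono (hC : Filtering b C) (x y : ℕ → Fin b) (hxy : lexLE b x y) :
    lexLE b (addressMap C x) (addressMap C y) := by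
  by_contra hyx
  obtain ⟨n, hagree, hlt⟩ := not_lexLE_iff.1 hyx
  have hprefix : address C y n = address C x n := by
    simp only [address_eq_ofFn, hagree _ (Fin.is_lt _)]
  have hy := mem_address y hC (n + 1)
  have hx := mem_address x hC (n + 1)
  rw [address_succ, hprefix] at hy
  rw [address_succ] at hx
  exact not_lexLE_iff.2 (hC.lexLT_of_mem hlt hy hx) hxy

theorem cSur_addressMap (hC : Filtering b C) : CSur b (addressMap C) :=
  ⟨continuous_addressMap hC, surjective_addressMap hC, addressMap_mono hC⟩

end Filtering

end

/-- for `h ∈ C↑_sur(b^ω)`, the filterings refining the filtering of `h`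
are exactly the filterings of the compositions `f ∘ h`, `f ∈ C↑_sur(b^ω)`. -/
theorem refining_filterings_eq_compositions (b : ℕ) (hb : 2 ≤ b)
    (h : (ℕ → Fin b) → (ℕ → Fin b)) (hh : CSur b h) :
    {V : List (Fin b) → Set (ℕ → Fin b) | Filtering b V ∧
        ∀ s, InAlgebra {S | ∃ t : List (Fin b), S = h ⁻¹' W b t} (V s)} =
      {V | ∃ f, CSur b f ∧ V = fun s => (f ∘ h) ⁻¹' W b s} := by
  have : NeZero b := ⟨by omega⟩
  ext V
  constructor
  · rintro ⟨hV, hVh⟩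
    choose C hC using fun s => ((InAlgebra.preimage_iff h (W b)).1 (hVh s)).imp fun _ => And.right
    obtain rfl : V = fun s => h ⁻¹' C s := funext hC
    have hCfilt : Filtering b C := hV.of_preimage hh
    refine ⟨_, Filtering.cSur_addressMap hCfilt, funext fun s => ?_⟩
    rw [preimage_comp, Filtering.preimage_addressMap_W hCfilt]
  · rintro ⟨f, hf, rfl⟩
    refine ⟨filtering_W.preimage (hf.comp hh),
      fun s => (InAlgebra.preimage_iff h (W b)).2 ⟨f ⁻¹' W b s, ?_, rfl⟩⟩
    exact .of_isClopen isTopologicalBasis_W ((isClopen_W s).preimage hf.1)
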